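/- Suppose (G_n, c_n), γ_n > 0 and δ_n → 0 satisfy Assumption (EO), with G_n simple and c_n connected. With E_n(ε) := {(u,v) ∈ E(G_n) : R_eff(u↔v) ≤ ε}, we have Σ_{(u,v)∈E(G_n)∖E_n(4/γ_n)} c(u,v)·R_eff(u↔v) = O(δ_n)|V(G_n)|. -/

import Mathlib

open MeasureTheory Filter Finset

noncomputable section

set_option linter.unusedSectionVars false

namespace WSTPaper

variable {V : Type} [Fintype V] [DecidableEq V]

/-- The conductance `C_v = Σ_{u ~ v} c(u,v)` of a vertex in the electric network `(G, c)`. -/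
def vertCond (G : SimpleGraph V) [DecidableRel G.Adj] (c : Sym2 V → ℝ) (v : V) : ℝ :=
  ∑ u ∈ G.neighborFinset v, c s(u, v)

/-- The Dirichlet energy of a function `h` on the electric network `(G, c)`. -/
def energy (G : SimpleGraph V) [DecidableRel G.Adj] (c : Sym2 V → ℝ) (h : V → ℝ) : ℝ :=
  (1 / 2) * ∑ v : V, ∑ u ∈ G.neighborFinset v, c s(u, v) * (h u - h v) ^ 2

/-- The effective conductance `C_eff(a ↔ Z)`.  By Dirichlet's principle it equals
`C_a · P_a(τ_Z < τ_a⁺)`, the random-walk characterization of effective conductance. -/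
def effCond (G : SimpleGraph V) [DecidableRel G.Adj] (c : Sym2 V → ℝ) (a : V) (Z : Set V) : ℝ :=
  ⨅ h : {h : V → ℝ // h a = 1 ∧ ∀ z ∈ Z, h z = 0}, energy G c (h : V → ℝ)

/-- The effective resistance `R_eff(a ↔ Z) = 1 / (C_a · P_a(τ_Z < τ_a⁺))`. -/
def effResSet (G : SimpleGraph V) [DecidableRel G.Adj] (c : Sym2 V → ℝ) (a : V) (Z : Set V) :
    ℝ := (effCond G c a Z)⁻¹

/-- The effective resistance `R_eff(a ↔ b) = 1 / (C_a · P_a(τ_b < τ_a⁺))` between two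
vertices of the electric network `(G, c)`. -/
def effRes (G : SimpleGraph V) [DecidableRel G.Adj] (c : Sym2 V → ℝ) (a b : V) : ℝ :=
  effResSet G c a {b}

section Aux
open Matrix

variable (G : SimpleGraph V) [DecidableRel G.Adj] (c : Sym2 V → ℝ)

def Amat : Matrix V V ℝ := Matrix.of fun u v => if G.Adj u v then c s(u, v) else 0

lemma Amat_apply (u v : V) : Amat G c u v = if G.Adj u v then c s(u, v) else 0 := rfl

lemma Amat_symm (u v : V) : Amat G c u v = Amat G c v u := by
  simp only [Amat_apply]
  by_cases h : G.Adj u v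
  · rw [if_pos h, if_pos h.symm, Sym2.eq_swap]
  · rw [if_neg h, if_neg (fun h' => h h'.symm)]

lemma Amat_nonneg (hpos : ∀ e ∈ G.edgeSet, 0 < c e) (u v : V) : 0 ≤ Amat G c u v := by
  simp only [Amat_apply]
  split_ifs with h
  · exact (hpos _ (G.mem_edgeSet.mpr h)).le
  · exact le_refl _

lemma sum_nbr (f : V → ℝ) (u : V) :
    ∑ v ∈ G.neighborFinset u, f v = ∑ v : V, if G.Adj u v then f v else 0 := by
  rw [SimpleGraph.neighborFinset_eq_filter, Finset.sum_filter]

lemma vertCond_eq_sum (v : V) : vertCond G c v = ∑ u : V, Amat G c v u := by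
  rw [vertCond, sum_nbr]
  refine Finset.sum_congr rfl fun u _ => ?_
  simp only [Amat_apply]
  by_cases h : G.Adj v u
  · rw [if_pos h, if_pos h, Sym2.eq_swap]
  · rw [if_neg h, if_neg h]

lemma energy_eq_full (h : V → ℝ) :
    energy G c h = (1 / 2) * ∑ w : V, ∑ z : V, Amat G c w z * (h z - h w) ^ 2 := by
  rw [energy]
  congr 1
  refine Finset.sum_congr rfl fun w _ => ?_
  rw [sum_nbr]
  refine Finset.sum_congr rfl fun z _ => ?_
  simp only [Amat_apply]
  by_cases hadj : G.Adj w z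
  · rw [if_pos hadj, if_pos hadj, Sym2.eq_swap]
  · rw [if_neg hadj, if_neg hadj, zero_mul]

def Lmat : Matrix V V ℝ :=
  Matrix.of fun u v => (if u = v then vertCond G c u else 0) - Amat G c u v

lemma Lmat_apply (u v : V) :
    Lmat G c u v = (if u = v then vertCond G c u else 0) - Amat G c u v := rfl

lemma Lmat_symm (u v : V) : Lmat G c u v = Lmat G c v u := by
  simp only [Lmat_apply, Amat_symm G c u v]
  congr 1
  by_cases h : u = v
  · subst h; rfl
  · rw [if_neg h, if_neg (Ne.symm h)]

lemma quad_eq (h : V → ℝ) : h ⬝ᵥ (Lmat G c) *ᵥ h = energy G c h := by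
  have expand : h ⬝ᵥ (Lmat G c) *ᵥ h
      = (∑ u : V, vertCond G c u * h u ^ 2) - ∑ u : V, ∑ v : V, Amat G c u v * h u * h v := by
    simp only [dotProduct, Matrix.mulVec, Lmat_apply, Finset.mul_sum, sub_mul, mul_sub,
      Finset.sum_sub_distrib]
    congr 1
    · refine Finset.sum_congr rfl fun u _ => ?_
      rw [Finset.sum_eq_single u]
      · rw [if_pos rfl]; ring
      · intro v _ hv; rw [if_neg (Ne.symm hv), zero_mul, mul_zero]
      · intro hu; exact absurd (Finset.mem_univ u) hu
    · refine Finset.sum_congr rfl fun u _ => Finset.sum_congr rfl fun v _ => by ring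
  have e1 : ∑ w : V, ∑ z : V, Amat G c w z * h z ^ 2 = ∑ u : V, vertCond G c u * h u ^ 2 := by
    rw [Finset.sum_comm]
    refine Finset.sum_congr rfl fun z _ => ?_
    rw [vertCond_eq_sum, Finset.sum_mul]
    exact Finset.sum_congr rfl fun w _ => by rw [Amat_symm G c z w]
  have e2 : ∑ w : V, ∑ z : V, Amat G c w z * h w ^ 2 = ∑ u : V, vertCond G c u * h u ^ 2 := by
    refine Finset.sum_congr rfl fun w _ => ?_
    rw [vertCond_eq_sum, Finset.sum_mul, ← Finset.sum_mul]
  have e3 : ∑ w : V, ∑ z : V, Amat G c w z * (h z * h w)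
      = ∑ u : V, ∑ v : V, Amat G c u v * h u * h v := by
    rw [Finset.sum_comm]
    exact Finset.sum_congr rfl fun z _ => Finset.sum_congr rfl fun w _ => by
      rw [Amat_symm G c z w]; ring
  rw [expand, energy_eq_full]
  have step : ∑ w : V, ∑ z : V, Amat G c w z * (h z - h w) ^ 2
      = ∑ w : V, ∑ z : V,
        (Amat G c w z * h z ^ 2 + Amat G c w z * h w ^ 2 - 2 * (Amat G c w z * (h z * h w))) :=
    Finset.sum_congr rfl fun w _ => Finset.sum_congr rfl fun z _ => by ring
  rw [step]
  simp only [Finset.sum_sub_distrib, Finset.sum_add_distrib, ← Finset.mul_sum]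
  rw [e1, e2, e3]
  ring

lemma Lmat_row_sum (u : V) : ∑ v : V, Lmat G c u v = 0 := by
  simp only [Lmat_apply, Finset.sum_sub_distrib, Finset.sum_ite_eq, Finset.mem_univ, if_pos]
  rw [← vertCond_eq_sum, sub_self]

lemma energy_nonneg (hpos : ∀ e ∈ G.edgeSet, 0 < c e) (h : V → ℝ) : 0 ≤ energy G c h := by
  rw [energy_eq_full]
  refine mul_nonneg (by norm_num) (Finset.sum_nonneg fun w _ => Finset.sum_nonneg fun z _ => ?_)
  exact mul_nonneg (Amat_nonneg G c hpos w z) (sq_nonneg _)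

lemma apply_eq_of_energy_zero (hpos : ∀ e ∈ G.edgeSet, 0 < c e) (hconn : G.Preconnected)
    {h : V → ℝ} (hz : energy G c h = 0) (u v : V) : h u = h v := by
  have hsum : ∑ w : V, ∑ z : V, Amat G c w z * (h z - h w) ^ 2 = 0 := by
    have := energy_eq_full G c h
    rw [hz] at this
    linarith [this.symm]
  have key : ∀ w z : V, G.Adj w z → h z = h w := by
    intro w z hadj
    have h1 := (Finset.sum_eq_zero_iff_of_nonneg (fun w _ =>
      Finset.sum_nonneg fun z _ => mul_nonneg (Amat_nonneg G c hpos w z) (sq_nonneg _))).mp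
      hsum w (Finset.mem_univ w)
    have h2 := (Finset.sum_eq_zero_iff_of_nonneg (fun z _ =>
      mul_nonneg (Amat_nonneg G c hpos w z) (sq_nonneg _))).mp h1 z (Finset.mem_univ z)
    have hA : 0 < Amat G c w z := by
      rw [Amat_apply, if_pos hadj]
      exact hpos _ (G.mem_edgeSet.mpr hadj)
    have : (h z - h w) ^ 2 = 0 := by
      by_contra hne
      exact hne (by
        have := mul_eq_zero.mp h2
        rcases this with h' | h'
        · exact absurd h' hA.ne'
        · exact h')
    have := pow_eq_zero_iff (n := 2) (by norm_num) |>.mp this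
    linarith [sub_eq_zero.mp this]
  suffices H : ∀ {x y : V} (_ : G.Walk x y), h x = h y from H (hconn u v).some
  intro x y p
  induction p with
  | nil => rfl
  | cons hadj _ ih => exact ((key _ _ hadj).symm).trans ih

def Mmat : Matrix V V ℝ :=
  Matrix.of fun u v => Lmat G c u v + (Fintype.card V : ℝ)⁻¹

lemma Mmat_apply (u v : V) : Mmat G c u v = Lmat G c u v + (Fintype.card V : ℝ)⁻¹ := rfl

lemma Mmat_symm (u v : V) : Mmat G c u v = Mmat G c v u := by
  simp only [Mmat_apply, Lmat_symm G c u v]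

lemma quadM (x : V → ℝ) :
    x ⬝ᵥ (Mmat G c) *ᵥ x = energy G c x + (Fintype.card V : ℝ)⁻¹ * (∑ v : V, x v) ^ 2 := by
  have : x ⬝ᵥ (Mmat G c) *ᵥ x
      = x ⬝ᵥ (Lmat G c) *ᵥ x + (Fintype.card V : ℝ)⁻¹ * (∑ v : V, x v) ^ 2 := by
    simp only [dotProduct, Matrix.mulVec, Mmat_apply, Finset.mul_sum, add_mul, mul_add,
      Finset.sum_add_distrib]
    congr 1
    rw [sq, Finset.sum_mul, Finset.mul_sum]
    refine Finset.sum_congr rfl fun u _ => ?_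
    simp only [Finset.mul_sum]
    exact Finset.sum_congr rfl fun v _ => by ring
  rw [this, quad_eq]

lemma Mmat_posDef (hpos : ∀ e ∈ G.edgeSet, 0 < c e) (hconn : G.Connected) :
    (Mmat G c).PosDef := by
  have hcard : 0 < (Fintype.card V : ℝ) := by
    have : Nonempty V := hconn.nonempty
    exact_mod_cast Fintype.card_pos
  refine Matrix.PosDef.of_dotProduct_mulVec_pos ?_ ?_
  · ext i j
    simp only [Matrix.conjTranspose_apply, Matrix.transpose_apply, star_trivial]
    exact Mmat_symm G c j i
  · intro x hx
    simp only [star_trivial]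
    rw [quadM]
    rcases lt_or_eq_of_le (energy_nonneg G c hpos x) with hgt | heq
    · have : 0 ≤ (Fintype.card V : ℝ)⁻¹ * (∑ v : V, x v) ^ 2 :=
        mul_nonneg (by positivity) (sq_nonneg _)
      linarith
    · obtain ⟨v0⟩ : Nonempty V := hconn.nonempty
      have hconst : ∀ u v : V, x u = x v :=
        apply_eq_of_energy_zero G c hpos hconn.preconnected heq.symm
      have hk : x v0 ≠ 0 := by
        intro h0
        apply hx
        funext w; rw [hconst w v0, h0]; rfl
      have hsumx : ∑ v : V, x v = (Fintype.card V : ℝ) * x v0 := by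
        rw [Finset.sum_congr rfl fun v _ => hconst v v0]
        simp [Finset.sum_const, nsmul_eq_mul, Finset.card_univ]
      rw [← heq, hsumx, zero_add]
      have h2 : ((Fintype.card V : ℝ) * x v0) ^ 2 > 0 := by positivity
      positivity

lemma energy_affine (a b : ℝ) (h : V → ℝ) :
    energy G c (fun w => a * h w + b) = a ^ 2 * energy G c h := by
  have key : ∀ v u : V, c s(u, v) * ((a * h u + b) - (a * h v + b)) ^ 2
      = a ^ 2 * (c s(u, v) * (h u - h v) ^ 2) := fun v u => by ring
  simp only [energy, key, ← Finset.mul_sum]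
  ring

def xvec (u v : V) : V → ℝ := fun w => (if w = u then 1 else 0) - (if w = v then 1 else 0)

def resM (u v : V) : ℝ := xvec u v ⬝ᵥ (Mmat G c)⁻¹ *ᵥ xvec u v

lemma sum_xvec {u v : V} (huv : u ≠ v) : ∑ w : V, xvec u v w = 0 := by
  simp only [xvec, Finset.sum_sub_distrib, Finset.sum_ite_eq', Finset.mem_univ, if_pos, sub_self]

lemma dot_xvec (u v : V) (g : V → ℝ) : xvec u v ⬝ᵥ g = g u - g v := by
  simp only [dotProduct, xvec, sub_mul, one_mul, Finset.sum_sub_distrib, ite_mul, zero_mul,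
    Finset.sum_ite_eq', Finset.mem_univ, if_pos]

section Main

variable {G c}

lemma Mmat_isUnit_det (hpos : ∀ e ∈ G.edgeSet, 0 < c e) (hconn : G.Connected) : IsUnit (Mmat G c).det :=
  isUnit_iff_ne_zero.mpr (Mmat_posDef G c hpos hconn).det_pos.ne'

lemma Mmat_transpose : (Mmat G c)ᵀ = Mmat G c :=
  Matrix.ext fun u v => Mmat_symm G c v u

lemma Kmat_transpose : ((Mmat G c)⁻¹)ᵀ = (Mmat G c)⁻¹ := by
  rw [Matrix.transpose_nonsing_inv, Mmat_transpose]

lemma Mmat_mulVec_ones (hconn : G.Connected) : Mmat G c *ᵥ (fun _ => (1 : ℝ)) = fun _ => (1 : ℝ) := by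
  have hcard : (0:ℝ) < (Fintype.card V : ℝ) := by
    have : Nonempty V := hconn.nonempty
    exact_mod_cast Fintype.card_pos
  funext w
  simp only [Matrix.mulVec, dotProduct, Mmat_apply, mul_one, Finset.sum_add_distrib,
    Lmat_row_sum, Finset.sum_const, Finset.card_univ, nsmul_eq_mul, zero_add]
  field_simp

lemma Kmat_mulVec_ones (hpos : ∀ e ∈ G.edgeSet, 0 < c e) (hconn : G.Connected) : (Mmat G c)⁻¹ *ᵥ (fun _ => (1 : ℝ)) = fun _ => (1 : ℝ) := by
  conv_lhs => rw [← Mmat_mulVec_ones (G := G) (c := c) hconn]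
  rw [Matrix.mulVec_mulVec, Matrix.nonsing_inv_mul _ (Mmat_isUnit_det hpos hconn),
    Matrix.one_mulVec]

lemma resM_pos (hpos : ∀ e ∈ G.edgeSet, 0 < c e) (hconn : G.Connected) {u v : V} (huv : u ≠ v) : 0 < resM G c u v := by
  have hK : ((Mmat G c)⁻¹).PosDef := (Mmat_posDef G c hpos hconn).inv
  have hx : xvec u v ≠ 0 := by
    intro h0
    have : xvec u v u = 0 := by rw [h0]; rfl
    simp only [xvec, if_pos rfl, if_neg huv, sub_zero] at this
    norm_num at this
  have := hK.dotProduct_mulVec_pos hx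
  simpa [resM] using this

lemma sum_Kvec (hpos : ∀ e ∈ G.edgeSet, 0 < c e) (hconn : G.Connected) {u v : V} (huv : u ≠ v) :
    ∑ w : V, ((Mmat G c)⁻¹ *ᵥ xvec u v) w = 0 := by
  have h1 : (fun _ => (1:ℝ)) ⬝ᵥ ((Mmat G c)⁻¹ *ᵥ xvec u v) = 0 := by
    rw [Matrix.dotProduct_mulVec, ← Matrix.mulVec_transpose, Kmat_transpose,
      Kmat_mulVec_ones hpos hconn]
    rw [dotProduct_comm, dot_xvec]
    norm_num
  simpa [dotProduct] using h1

lemma Lmat_mulVec_Kvec (hpos : ∀ e ∈ G.edgeSet, 0 < c e) (hconn : G.Connected) {u v : V} (huv : u ≠ v) :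
    Lmat G c *ᵥ ((Mmat G c)⁻¹ *ᵥ xvec u v) = xvec u v := by
  have hMy : Mmat G c *ᵥ ((Mmat G c)⁻¹ *ᵥ xvec u v) = xvec u v := by
    rw [Matrix.mulVec_mulVec, Matrix.mul_nonsing_inv _ (Mmat_isUnit_det hpos hconn),
      Matrix.one_mulVec]
  funext w
  have h1 : (Mmat G c *ᵥ ((Mmat G c)⁻¹ *ᵥ xvec u v)) w
      = (Lmat G c *ᵥ ((Mmat G c)⁻¹ *ᵥ xvec u v)) w
        + (Fintype.card V : ℝ)⁻¹ * ∑ z : V, ((Mmat G c)⁻¹ *ᵥ xvec u v) z := by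
    simp only [Matrix.mulVec, dotProduct, Mmat_apply, add_mul, Finset.sum_add_distrib,
      Finset.mul_sum]
  rw [hMy] at h1
  rw [sum_Kvec hpos hconn huv, mul_zero, add_zero] at h1
  exact h1.symm

end Main

lemma Lmat_transpose : (Lmat G c)ᵀ = Lmat G c :=
  Matrix.ext fun u v => Lmat_symm G c v u

lemma dot_expand (L : Matrix V V ℝ) (t : ℝ) (y g : V → ℝ) :
    (fun w => t * y w + g w) ⬝ᵥ L *ᵥ (fun w => t * y w + g w)
      = t * t * (y ⬝ᵥ L *ᵥ y) + t * (y ⬝ᵥ L *ᵥ g) + t * (g ⬝ᵥ L *ᵥ y) + g ⬝ᵥ L *ᵥ g := by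
  simp only [dotProduct, Matrix.mulVec, Finset.mul_sum, ← Finset.sum_add_distrib]
  refine Finset.sum_congr rfl fun w _ => ?_
  exact Finset.sum_congr rfl fun z _ => by ring

section Crux

variable {G c}

lemma effCond_eq_resM (hpos : ∀ e ∈ G.edgeSet, 0 < c e) (hconn : G.Connected)
    {u v : V} (huv : G.Adj u v) :
    effCond G c u {v} = (resM G c u v)⁻¹ := by
  have hrpos : 0 < resM G c u v := resM_pos hpos hconn huv.ne
  set K := (Mmat G c)⁻¹ with hKdef
  set x := xvec u v with hxdef
  set y := K *ᵥ x with hydef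
  set r := resM G c u v with hrdef
  have hne : r ≠ 0 := ne_of_gt hrpos
  have hr : r = x ⬝ᵥ y := rfl
  have hLy : Lmat G c *ᵥ y = x := Lmat_mulVec_Kvec hpos hconn huv.ne
  have hyLy : y ⬝ᵥ Lmat G c *ᵥ y = r := by
    rw [hLy, dotProduct_comm, ← hr]
  have hyx : y u - y v = r := by rw [hr, hxdef, dot_xvec]
  -- the optimal potential
  set g0 : V → ℝ := fun w => r⁻¹ * y w + -(r⁻¹ * y v) with hg0def
  have hg0u : g0 u = 1 := by
    simp only [hg0def]
    have : r⁻¹ * y u + -(r⁻¹ * y v) = r⁻¹ * (y u - y v) := by ring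
    rw [this, hyx, inv_mul_cancel₀ hne]
  have hg0v : g0 v = 0 := by simp only [hg0def]; ring
  have hEg0 : energy G c g0 = r⁻¹ := by
    rw [hg0def]
    have := energy_affine G c r⁻¹ (-(r⁻¹ * y v)) y
    have heqfun : (fun w => r⁻¹ * y w + -(r⁻¹ * y v)) = fun w => r⁻¹ * y w + -(r⁻¹ * y v) := rfl
    rw [this]
    have hEy : energy G c y = r := by rw [← quad_eq, hyLy]
    rw [hEy, sq]
    field_simp
  have hbdd : BddBelow (Set.range fun h : {h : V → ℝ // h u = 1 ∧ ∀ z ∈ ({v} : Set V), h z = 0}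
      => energy G c (h : V → ℝ)) := by
    refine ⟨0, ?_⟩
    rintro s ⟨g, rfl⟩
    exact energy_nonneg G c hpos _
  have hg0mem : ∀ z ∈ ({v} : Set V), g0 z = 0 := by
    intro z hz
    rw [Set.mem_singleton_iff] at hz
    rw [hz]; exact hg0v
  refine le_antisymm ?_ ?_
  · have h1 := ciInf_le hbdd ⟨g0, hg0u, hg0mem⟩
    rw [effCond]
    exact h1.trans_eq hEg0
  · rw [effCond]
    have : Nonempty {h : V → ℝ // h u = 1 ∧ ∀ z ∈ ({v} : Set V), h z = 0} := ⟨⟨g0, hg0u, hg0mem⟩⟩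
    refine le_ciInf ?_
    rintro ⟨g, hg1, hg2⟩
    have hgv : g v = 0 := hg2 v rfl
    have hxg : x ⬝ᵥ g = 1 := by rw [hxdef, dot_xvec, hg1, hgv, sub_zero]
    have hyLg : y ⬝ᵥ Lmat G c *ᵥ g = 1 := by
      rw [Matrix.dotProduct_mulVec, ← Matrix.mulVec_transpose, Lmat_transpose, hLy, hxg]
    have hgLy : g ⬝ᵥ Lmat G c *ᵥ y = 1 := by
      rw [hLy, dotProduct_comm, hxg]
    have hquad : 0 ≤ energy G c (fun w => (-r⁻¹) * y w + g w) := energy_nonneg G c hpos _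
    rw [← quad_eq, dot_expand, hyLy, hyLg, hgLy, quad_eq] at hquad
    have hrr : (-r⁻¹) * (-r⁻¹) * r = r⁻¹ := by field_simp
    rw [hrr] at hquad
    show r⁻¹ ≤ energy G c g
    linarith

lemma effRes_eq_resM (hpos : ∀ e ∈ G.edgeSet, 0 < c e) (hconn : G.Connected)
    {u v : V} (huv : G.Adj u v) :
    effRes G c u v = resM G c u v := by
  rw [effRes, effResSet, effCond_eq_resM hpos hconn huv, inv_inv]

lemma effRes_pos (hpos : ∀ e ∈ G.edgeSet, 0 < c e) (hconn : G.Connected)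
    {u v : V} (huv : G.Adj u v) : 0 < effRes G c u v := by
  rw [effRes_eq_resM hpos hconn huv]
  exact resM_pos hpos hconn huv.ne

end Crux

section Foster

variable {G c}

lemma mulVec_xvec (P : Matrix V V ℝ) (u v : V) :
    P *ᵥ xvec u v = fun w => P w u - P w v := by
  funext w
  simp only [Matrix.mulVec, dotProduct, xvec, mul_sub, Finset.sum_sub_distrib,
    mul_ite, mul_one, mul_zero, Finset.sum_ite_eq', Finset.mem_univ, if_pos]

lemma Kmat_symm_apply (u v : V) : (Mmat G c)⁻¹ u v = (Mmat G c)⁻¹ v u := by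
  conv_lhs => rw [← Kmat_transpose (G := G) (c := c)]
  rfl

lemma resM_entries (u v : V) :
    resM G c u v = (Mmat G c)⁻¹ u u + (Mmat G c)⁻¹ v v
      - (Mmat G c)⁻¹ u v - (Mmat G c)⁻¹ v u := by
  rw [resM, dot_xvec, mulVec_xvec]
  ring

lemma sum_K_mulVec (hpos : ∀ e ∈ G.edgeSet, 0 < c e) (hconn : G.Connected) (f : V → ℝ) :
    ∑ z : V, ((Mmat G c)⁻¹ *ᵥ f) z = ∑ z : V, f z := by
  have h1 : (fun _ => (1:ℝ)) ⬝ᵥ ((Mmat G c)⁻¹ *ᵥ f) = (fun _ => (1:ℝ)) ⬝ᵥ f := by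
    rw [Matrix.dotProduct_mulVec, ← Matrix.mulVec_transpose, Kmat_transpose,
      Kmat_mulVec_ones hpos hconn]
  simpa [dotProduct] using h1

lemma Lmat_mulVec_K (hpos : ∀ e ∈ G.edgeSet, 0 < c e) (hconn : G.Connected) (f : V → ℝ) :
    Lmat G c *ᵥ ((Mmat G c)⁻¹ *ᵥ f)
      = fun w => f w - (Fintype.card V : ℝ)⁻¹ * ∑ z : V, f z := by
  have hMy : Mmat G c *ᵥ ((Mmat G c)⁻¹ *ᵥ f) = f := by
    rw [Matrix.mulVec_mulVec, Matrix.mul_nonsing_inv _ (Mmat_isUnit_det hpos hconn),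
      Matrix.one_mulVec]
  funext w
  have h1 : (Mmat G c *ᵥ ((Mmat G c)⁻¹ *ᵥ f)) w
      = (Lmat G c *ᵥ ((Mmat G c)⁻¹ *ᵥ f)) w
        + (Fintype.card V : ℝ)⁻¹ * ∑ z : V, ((Mmat G c)⁻¹ *ᵥ f) z := by
    simp only [Matrix.mulVec, dotProduct, Mmat_apply, add_mul, Finset.sum_add_distrib,
      Finset.mul_sum]
  rw [hMy, sum_K_mulVec hpos hconn] at h1
  have := h1.symm
  linarith [this]

/-- Foster's theorem, in ordered-pair form. -/
lemma foster (hpos : ∀ e ∈ G.edgeSet, 0 < c e) (hconn : G.Connected) :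
    ∑ u : V, ∑ v : V, Amat G c u v * resM G c u v
      = 2 * ((Fintype.card V : ℝ) - 1) := by
  classical
  set K := (Mmat G c)⁻¹ with hK
  have Ksym : ∀ a b : V, K a b = K b a := fun a b => Kmat_symm_apply a b
  have hNpos : (0:ℝ) < (Fintype.card V : ℝ) := by
    have : Nonempty V := hconn.nonempty
    exact_mod_cast Fintype.card_pos
  -- decompose
  have hdec : ∑ u : V, ∑ v : V, Amat G c u v * resM G c u v
      = (∑ u : V, ∑ v : V, Amat G c u v * K u u)
        + (∑ u : V, ∑ v : V, Amat G c u v * K v v)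
        - (∑ u : V, ∑ v : V, Amat G c u v * K u v)
        - (∑ u : V, ∑ v : V, Amat G c u v * K v u) := by
    simp only [← Finset.sum_add_distrib, ← Finset.sum_sub_distrib]
    refine Finset.sum_congr rfl fun u _ => Finset.sum_congr rfl fun v _ => ?_
    rw [resM_entries]
    ring
  have hS2 : ∑ u : V, ∑ v : V, Amat G c u v * K v v
      = ∑ u : V, ∑ v : V, Amat G c u v * K u u := by
    rw [Finset.sum_comm]
    exact Finset.sum_congr rfl fun v _ => Finset.sum_congr rfl fun u _ => by
      rw [Amat_symm]
  have hS3 : ∑ u : V, ∑ v : V, Amat G c u v * K u v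
      = ∑ u : V, ∑ v : V, Amat G c u v * K v u := by
    refine Finset.sum_congr rfl fun u _ => Finset.sum_congr rfl fun v _ => by
      rw [Ksym u v]
  have hS1 : ∑ u : V, ∑ v : V, Amat G c u v * K u u
      = ∑ u : V, vertCond G c u * K u u := by
    refine Finset.sum_congr rfl fun u _ => ?_
    rw [vertCond_eq_sum, Finset.sum_mul]
  -- trace identity
  have htrace : ∑ u : V, (vertCond G c u * K u u - ∑ w : V, Amat G c u w * K w u)
      = (Fintype.card V : ℝ) - 1 := by
    have hterm : ∀ u : V, vertCond G c u * K u u - ∑ w : V, Amat G c u w * K w u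
        = 1 - (Fintype.card V : ℝ)⁻¹ := by
      intro u
      have hcol : (K *ᵥ fun z => if z = u then (1:ℝ) else 0) = fun w => K w u := by
        funext w
        simp only [Matrix.mulVec, dotProduct, mul_ite, mul_one, mul_zero,
          Finset.sum_ite_eq', Finset.mem_univ, if_pos]
      have hLK := congrFun (Lmat_mulVec_K hpos hconn (fun z => if z = u then (1:ℝ) else 0)) u
      rw [hcol] at hLK
      have hsum1 : ∑ z : V, (if z = u then (1:ℝ) else 0) = 1 := by
        simp [Finset.sum_ite_eq', Finset.mem_univ, if_pos]
      rw [if_pos rfl, hsum1, mul_one] at hLK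
      have hlhs : (Lmat G c *ᵥ fun w => K w u) u
          = vertCond G c u * K u u - ∑ w : V, Amat G c u w * K w u := by
        simp only [Matrix.mulVec, dotProduct, Lmat_apply, sub_mul,
          Finset.sum_sub_distrib, ite_mul, zero_mul, Finset.sum_ite_eq, Finset.sum_ite_eq',
          Finset.mem_univ, if_pos]
      rw [hlhs] at hLK
      rw [hLK]
    rw [Finset.sum_congr rfl fun u _ => hterm u]
    rw [Finset.sum_const, Finset.card_univ, nsmul_eq_mul]
    field_simp
  have hswap : ∑ u : V, ∑ w : V, Amat G c u w * K w u
      = ∑ u : V, ∑ v : V, Amat G c u v * K v u := rfl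
  rw [hdec, hS2, hS3, hS1]
  have hmain : ∑ u : V, vertCond G c u * K u u - ∑ u : V, ∑ v : V, Amat G c u v * K v u
      = (Fintype.card V : ℝ) - 1 := by
    rw [← Finset.sum_sub_distrib]
    exact htrace
  linarith [hmain]

end Foster

section Test

variable {G c}

lemma energy_test {u v : V} (huv : G.Adj u v) (t : ℝ) :
    energy G c (fun w => if w = u then (1:ℝ) else if w = v then 0 else t)
      = (1 - t)^2 * (vertCond G c u - c s(u,v)) + t^2 * (vertCond G c v - c s(u,v))
        + c s(u,v) := by
  classical
  have hne : u ≠ v := huv.ne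
  set h : V → ℝ := fun w => if w = u then (1:ℝ) else if w = v then 0 else t with hh
  have hu : h u = 1 := by simp only [hh, if_pos rfl]
  have hv : h v = 0 := by simp [hh, if_neg hne.symm]
  set s0 : Finset V := (Finset.univ.erase u).erase v with hs0
  have hmem : ∀ w ∈ s0, w ≠ u ∧ w ≠ v := by
    intro w hw
    simp only [hs0, Finset.mem_erase, Finset.mem_univ] at hw
    exact ⟨hw.2.1, hw.1⟩
  have hw0 : ∀ w ∈ s0, h w = t := by
    intro w hw
    obtain ⟨h1, h2⟩ := hmem w hw
    simp only [hh, if_neg h1, if_neg h2]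
  have hsplit : ∀ f : V → ℝ, ∑ w : V, f w = f u + (f v + ∑ w ∈ s0, f w) := by
    intro f
    rw [← Finset.add_sum_erase _ f (Finset.mem_univ u)]
    congr 1
    rw [← Finset.add_sum_erase _ f (Finset.mem_erase.mpr ⟨hne.symm, Finset.mem_univ v⟩)]
  have hA0 : ∀ w : V, ∑ z ∈ s0, Amat G c w z
      = vertCond G c w - Amat G c w u - Amat G c w v := by
    intro w
    have h1 := hsplit (fun z => Amat G c w z)
    rw [← vertCond_eq_sum] at h1
    linarith
  have hAuv : Amat G c u v = c s(u,v) := by rw [Amat_apply, if_pos huv]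
  have hAvu : Amat G c v u = c s(u,v) := by rw [← Amat_symm, hAuv]
  have hdiag : ∀ w, Amat G c w w = 0 := fun w => by
    rw [Amat_apply, if_neg (G.irrefl)]
  rw [energy_eq_full]
  rw [hsplit (fun w => ∑ z : V, Amat G c w z * (h z - h w)^2)]
  -- piece w = u
  have pu : ∑ z : V, Amat G c u z * (h z - h u)^2
      = c s(u,v) + (t - 1)^2 * (vertCond G c u - c s(u,v)) := by
    rw [hsplit (fun z => Amat G c u z * (h z - h u)^2)]
    have e0 : Amat G c u u * (h u - h u)^2 = 0 := by rw [hdiag]; ring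
    have e1 : Amat G c u v * (h v - h u)^2 = c s(u,v) := by
      rw [hAuv, hu, hv]; ring
    have e2 : ∑ z ∈ s0, Amat G c u z * (h z - h u)^2
        = (t - 1)^2 * (vertCond G c u - c s(u,v)) := by
      rw [Finset.sum_congr rfl (fun z hz => by rw [hw0 z hz, hu])]
      rw [← Finset.sum_mul, hA0, hdiag, hAuv]
      ring
    rw [e0, e1, e2]
    ring
  -- piece w = v
  have pv : ∑ z : V, Amat G c v z * (h z - h v)^2
      = c s(u,v) + t^2 * (vertCond G c v - c s(u,v)) := by
    rw [hsplit (fun z => Amat G c v z * (h z - h v)^2)]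
    have e0 : Amat G c v v * (h v - h v)^2 = 0 := by rw [hdiag]; ring
    have e1 : Amat G c v u * (h u - h v)^2 = c s(u,v) := by
      rw [hAvu, hu, hv]; ring
    have e2 : ∑ z ∈ s0, Amat G c v z * (h z - h v)^2
        = t^2 * (vertCond G c v - c s(u,v)) := by
      rw [Finset.sum_congr rfl (fun z hz => by rw [hw0 z hz, hv])]
      rw [← Finset.sum_mul, hA0, hdiag, hAvu]
      ring
    rw [e0, e1, e2]
    ring
  -- piece w ∈ s0
  have ps : ∑ w ∈ s0, ∑ z : V, Amat G c w z * (h z - h w)^2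
      = (1 - t)^2 * (vertCond G c u - c s(u,v)) + t^2 * (vertCond G c v - c s(u,v)) := by
    have hterm : ∀ w ∈ s0, ∑ z : V, Amat G c w z * (h z - h w)^2
        = (1 - t)^2 * Amat G c w u + t^2 * Amat G c w v := by
      intro w hw
      rw [hsplit (fun z => Amat G c w z * (h z - h w)^2), hw0 w hw, hu, hv]
      have e2 : ∑ z ∈ s0, Amat G c w z * (h z - t)^2 = 0 := by
        refine Finset.sum_eq_zero fun z hz => by rw [hw0 z hz]; ring
      rw [e2]
      ring
    rw [Finset.sum_congr rfl hterm, Finset.sum_add_distrib, ← Finset.mul_sum, ← Finset.mul_sum]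
    have cu : ∑ w ∈ s0, Amat G c w u = vertCond G c u - c s(u,v) := by
      rw [Finset.sum_congr rfl fun w _ => Amat_symm G c w u, hA0 u, hdiag, hAuv]
      ring
    have cv : ∑ w ∈ s0, Amat G c w v = vertCond G c v - c s(u,v) := by
      rw [Finset.sum_congr rfl fun w _ => Amat_symm G c w v, hA0 v, hdiag, hAvu]
      ring
    rw [cu, cv]
  rw [pu, pv, ps]
  ring

lemma effCond_le_test (hpos : ∀ e ∈ G.edgeSet, 0 < c e) {u v : V} (huv : G.Adj u v) (t : ℝ) :
    effCond G c u {v}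
      ≤ (1 - t)^2 * (vertCond G c u - c s(u,v)) + t^2 * (vertCond G c v - c s(u,v))
        + c s(u,v) := by
  have hne : u ≠ v := huv.ne
  have hbdd : BddBelow (Set.range fun h : {h : V → ℝ // h u = 1 ∧ ∀ z ∈ ({v} : Set V), h z = 0}
      => energy G c (h : V → ℝ)) := by
    refine ⟨0, ?_⟩
    rintro s ⟨g, rfl⟩
    exact energy_nonneg G c hpos _
  have hmem : ∀ z ∈ ({v} : Set V),
      (fun w => if w = u then (1:ℝ) else if w = v then 0 else t) z = 0 := by
    intro z hz
    rw [Set.mem_singleton_iff] at hz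
    subst hz
    simp [if_neg hne.symm]
  have h1 := ciInf_le hbdd
    ⟨fun w => if w = u then (1:ℝ) else if w = v then 0 else t, by simp, hmem⟩
  rw [effCond]
  exact h1.trans_eq (energy_test huv t)

end Test

section PerEdge

variable {G c}

lemma effCond_pos (hpos : ∀ e ∈ G.edgeSet, 0 < c e) (hconn : G.Connected)
    {u v : V} (huv : G.Adj u v) : 0 < effCond G c u {v} := by
  rw [effCond_eq_resM hpos hconn huv]
  exact inv_pos.mpr (resM_pos hpos hconn huv.ne)

set_option maxHeartbeats 1000000 in
/-- The per-edge lower bound `c(e)·R(e) ≥ (1-4δ)·c(e)·(1/C_u + 1/C_v)` for an edge with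
both endpoints of conductance at least `γ`. -/
lemma per_edge_lower (hpos : ∀ e ∈ G.edgeSet, 0 < c e) (hconn : G.Connected)
    {u v : V} (huv : G.Adj u v) {γ δ : ℝ} (hγ : 0 < γ) (hδ1 : δ < 1)
    (hCu : γ ≤ vertCond G c u) (hCv : γ ≤ vertCond G c v)
    (hce : c s(u,v) ≤ δ * γ) :
    (1 - 4*δ) * (c s(u,v) * (1/vertCond G c u + 1/vertCond G c v))
      ≤ c s(u,v) * effRes G c u v := by
  have hc' : 0 < c s(u,v) := hpos _ (G.mem_edgeSet.mpr huv)
  have hδpos : 0 < δ := by nlinarith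
  have hRpos : 0 < effRes G c u v := effRes_pos hpos hconn huv
  have hCupos : 0 < vertCond G c u := lt_of_lt_of_le hγ hCu
  have hCvpos : 0 < vertCond G c v := lt_of_lt_of_le hγ hCv
  by_cases h4 : 1 - 4*δ ≤ 0
  · have h1 : 0 < c s(u,v) * (1/vertCond G c u + 1/vertCond G c v) := by positivity
    have h2 : (1 - 4*δ) * (c s(u,v) * (1/vertCond G c u + 1/vertCond G c v)) ≤ 0 :=
      mul_nonpos_of_nonpos_of_nonneg h4 h1.le
    exact h2.trans (mul_pos hc' hRpos).le
  push_neg at h4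
  have hcpos : 0 < effCond G c u {v} := effCond_pos hpos hconn huv
  have h1test := effCond_le_test hpos huv
      ((vertCond G c u - c s(u,v)) / ((vertCond G c u - c s(u,v)) + (vertCond G c v - c s(u,v))))
  set R := effRes G c u v with hResdef
  set E := effCond G c u {v} with hEdef
  set Cu := vertCond G c u with hCudef
  set Cv := vertCond G c v with hCvdef
  set c' := c s(u,v) with hc'def
  have hRes : R = E⁻¹ := rfl
  clear_value R E Cu Cv c'
  have hA : 0 < Cu - c' := by nlinarith
  have hB : 0 < Cv - c' := by nlinarith
  set A := Cu - c' with hAdef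
  set B := Cv - c' with hBdef
  have hAB : 0 < A + B := by linarith
  have hAγ : γ * (1 - δ) ≤ A := by rw [hAdef]; nlinarith
  have hBγ : γ * (1 - δ) ≤ B := by rw [hBdef]; nlinarith
  have hγδ : 0 < γ * (1 - δ) := by nlinarith
  clear_value A B
  set Q := A * B / (A + B) + c' with hQdef
  have hQpos : 0 < Q := by rw [hQdef]; positivity
  clear_value Q
  -- effCond ≤ Q
  have hcond : E ≤ Q := by
    have h2 : (1 - A/(A+B))^2 * A + (A/(A+B))^2 * B + c' = Q := by
      rw [hQdef]
      field_simp
      ring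
    exact le_of_le_of_eq h1test h2
  have hRge : Q⁻¹ ≤ R := by
    rw [hRes]
    exact inv_anti₀ hcpos hcond
  -- key numeric inequality
  have key : (1 - 4*δ) * (1/Cu + 1/Cv) ≤ Q⁻¹ := by
    have e1 : 1/Cu ≤ 1/A := by
      apply one_div_le_one_div_of_le hA
      linarith
    have e2 : 1/Cv ≤ 1/B := by
      apply one_div_le_one_div_of_le hB
      linarith
    have e3 : 1/A ≤ 1/(γ*(1-δ)) := one_div_le_one_div_of_le hγδ hAγ
    have e4 : 1/B ≤ 1/(γ*(1-δ)) := one_div_le_one_div_of_le hγδ hBγ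
    have eQ : (1/A + 1/B) * Q = 1 + c' * (1/A + 1/B) := by
      rw [hQdef]
      field_simp
      ring
    have ec : c' * (1/A + 1/B) ≤ 2*δ/(1-δ) := by
      have h1 : c' * (1/A + 1/B) ≤ (δ*γ) * (2/(γ*(1-δ))) := by
        have hsum : 1/A + 1/B ≤ 2/(γ*(1-δ)) := by
          have : (2:ℝ)/(γ*(1-δ)) = 1/(γ*(1-δ)) + 1/(γ*(1-δ)) := by ring
          linarith
        have h1A : 0 < 1/A + 1/B := by positivity
        nlinarith
      have h1δ : (0:ℝ) < 1 - δ := by linarith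
      have h2 : (δ*γ) * (2/(γ*(1-δ))) = 2*δ/(1-δ) := by
        field_simp
      linarith
    have h1δ : (0:ℝ) < 1 - δ := by linarith
    have hnum : (1 - 4*δ) * (1 + 2*δ/(1-δ)) ≤ 1 := by
      have hrw : 1 + 2*δ/(1-δ) = (1+δ)/(1-δ) := by
        field_simp
        ring
      rw [hrw, mul_div_assoc']
      rw [div_le_one h1δ]
      nlinarith
    have hq0 : (1 - 4*δ) * (1/A + 1/B) * Q ≤ 1 := by
      have e5 : (1 - 4*δ) * (1/A + 1/B) * Q = (1 - 4*δ) * ((1/A + 1/B) * Q) := by ring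
      rw [e5, eQ]
      calc (1 - 4*δ) * (1 + c' * (1/A + 1/B))
          ≤ (1 - 4*δ) * (1 + 2*δ/(1-δ)) := by
            apply mul_le_mul_of_nonneg_left _ h4.le
            linarith
        _ ≤ 1 := hnum
    have hq1 : (1 - 4*δ) * (1/A + 1/B) ≤ Q⁻¹ := by
      rw [inv_eq_one_div]
      rw [le_div_iff₀ hQpos]
      exact hq0
    calc (1 - 4*δ) * (1/Cu + 1/Cv) ≤ (1 - 4*δ) * (1/A + 1/B) := by
          apply mul_le_mul_of_nonneg_left _ h4.le
          linarith
      _ ≤ Q⁻¹ := hq1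
  calc (1 - 4*δ) * (c' * (1/Cu + 1/Cv)) = c' * ((1 - 4*δ) * (1/Cu + 1/Cv)) := by ring
    _ ≤ c' * Q⁻¹ := mul_le_mul_of_nonneg_left key hc'.le
    _ ≤ c' * R := mul_le_mul_of_nonneg_left hRge hc'.le

end PerEdge

section Assemble

variable {G c}

lemma row_sum_mul (u : V) (k : ℝ) :
    ∑ v : V, (if G.Adj u v then c s(u,v) * k else 0) = vertCond G c u * k := by
  rw [vertCond_eq_sum, Finset.sum_mul]
  refine Finset.sum_congr rfl fun v _ => ?_
  rw [Amat_apply]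
  by_cases h : G.Adj u v
  · rw [if_pos h, if_pos h]
  · rw [if_neg h, if_neg h, zero_mul]

lemma row_sum_mul_cond (u : V) (q : Prop) [Decidable q] (k : ℝ) :
    ∑ v : V, (if G.Adj u v ∧ q then c s(u,v) * k else 0)
      = if q then vertCond G c u * k else 0 := by
  by_cases hq : q
  · rw [if_pos hq, ← row_sum_mul (G := G) (c := c) u k]
    exact Finset.sum_congr rfl fun v _ => by
      by_cases h : G.Adj u v
      · rw [if_pos ⟨h, hq⟩, if_pos h]
      · rw [if_neg (fun hh => h hh.1), if_neg h]
  · rw [if_neg hq]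
    exact Finset.sum_eq_zero fun v _ => by rw [if_neg (fun hh => hq hh.2)]

lemma sum_a_eq (hCpos : ∀ w : V, 0 < vertCond G c w) :
    ∑ u : V, ∑ v : V,
        (if G.Adj u v then c s(u,v) * (1/vertCond G c u + 1/vertCond G c v) else 0)
      = 2 * (Fintype.card V : ℝ) := by
  have split : ∀ u v : V,
      (if G.Adj u v then c s(u,v) * (1/vertCond G c u + 1/vertCond G c v) else 0)
        = (if G.Adj u v then c s(u,v) * (1/vertCond G c u) else 0)
          + (if G.Adj u v then c s(u,v) * (1/vertCond G c v) else 0) := by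
    intro u v
    by_cases h : G.Adj u v
    · rw [if_pos h, if_pos h, if_pos h]; ring
    · rw [if_neg h, if_neg h, if_neg h]; ring
  simp only [split, Finset.sum_add_distrib]
  have hX : ∑ u : V, ∑ v : V, (if G.Adj u v then c s(u,v) * (1/vertCond G c u) else 0)
      = (Fintype.card V : ℝ) := by
    have : ∀ u : V, ∑ v : V, (if G.Adj u v then c s(u,v) * (1/vertCond G c u) else 0)
        = 1 := by
      intro u
      rw [row_sum_mul, mul_one_div, div_self (hCpos u).ne']
    rw [Finset.sum_congr rfl fun u _ => this u]
    simp [Finset.card_univ]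
  have hY : ∑ u : V, ∑ v : V, (if G.Adj u v then c s(u,v) * (1/vertCond G c v) else 0)
      = (Fintype.card V : ℝ) := by
    rw [Finset.sum_comm]
    have : ∀ v : V, ∑ u : V, (if G.Adj u v then c s(u,v) * (1/vertCond G c v) else 0)
        = 1 := by
      intro v
      have e : ∀ u : V, (if G.Adj u v then c s(u,v) * (1/vertCond G c v) else 0)
          = (if G.Adj v u then c s(v,u) * (1/vertCond G c v) else 0) := by
        intro u
        by_cases h : G.Adj u v
        · rw [if_pos h, if_pos h.symm, Sym2.eq_swap]
        · rw [if_neg h, if_neg (fun hh => h hh.symm)]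
      rw [Finset.sum_congr rfl fun u _ => e u, row_sum_mul, mul_one_div,
        div_self (hCpos v).ne']
    rw [Finset.sum_congr rfl fun v _ => this v]
    simp [Finset.card_univ]
  rw [hX, hY]
  ring

lemma foster' (hpos : ∀ e ∈ G.edgeSet, 0 < c e) (hconn : G.Connected) :
    ∑ u : V, ∑ v : V, (if G.Adj u v then c s(u,v) * effRes G c u v else 0)
      = 2 * ((Fintype.card V : ℝ) - 1) := by
  rw [← foster hpos hconn]
  refine Finset.sum_congr rfl fun u _ => Finset.sum_congr rfl fun v _ => ?_
  rw [Amat_apply]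
  by_cases h : G.Adj u v
  · rw [if_pos h, if_pos h, effRes_eq_resM hpos hconn h]
  · rw [if_neg h, if_neg h, zero_mul]

end Assemble

section Touch

variable {G c}

lemma card_Wc {γ δ : ℝ}
    (hW : (((Finset.univ.filter fun v : V => γ ≤ vertCond G c v).card : ℝ))
        ≥ (1 - δ) * (Fintype.card V : ℝ)) :
    ((Finset.univ.filter fun v : V => vertCond G c v < γ).card : ℝ)
      ≤ δ * (Fintype.card V : ℝ) := by
  classical
  have h1 : (Finset.univ.filter fun v : V => vertCond G c v < γ)
      = (Finset.univ.filter fun v : V => ¬ (γ ≤ vertCond G c v)) := by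
    refine Finset.filter_congr fun v _ => ?_
    rw [not_le]
  have h2 : (Finset.univ.filter fun v : V => γ ≤ vertCond G c v).card
      + (Finset.univ.filter fun v : V => ¬ (γ ≤ vertCond G c v)).card
      = Fintype.card V := by
    rw [Finset.card_filter_add_card_filter_not, Finset.card_univ]
  have h3 : ((Finset.univ.filter fun v : V => γ ≤ vertCond G c v).card : ℝ)
      + ((Finset.univ.filter fun v : V => ¬ (γ ≤ vertCond G c v)).card : ℝ)
      = (Fintype.card V : ℝ) := by
    exact_mod_cast congrArg (fun n : ℕ => (n : ℝ)) h2
  rw [h1]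
  nlinarith [hW, h3]

lemma double_sum_le {f g : V → V → ℝ} (h : ∀ u v : V, f u v ≤ g u v) :
    ∑ u : V, ∑ v : V, f u v ≤ ∑ u : V, ∑ v : V, g u v :=
  Finset.sum_le_sum fun u _ => Finset.sum_le_sum fun v _ => h u v

lemma sum_s1_le {γ δ : ℝ} (hpos : ∀ e ∈ G.edgeSet, 0 < c e) (hγ : 0 < γ)
    (hCpos : ∀ w : V, 0 < vertCond G c w)
    (hWc : ((Finset.univ.filter fun v : V => vertCond G c v < γ).card : ℝ)
        ≤ δ * (Fintype.card V : ℝ)) :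
    ∑ u : V, ∑ v : V,
        (if G.Adj u v ∧ vertCond G c u < γ
          then c s(u,v) * (1/vertCond G c u + 1/vertCond G c v) else 0)
      ≤ 3 * (δ * (Fintype.card V : ℝ)) := by
  classical
  have hcnn : ∀ {u v : V}, G.Adj u v → 0 ≤ c s(u,v) := fun h =>
    (hpos _ (G.mem_edgeSet.mpr h)).le
  have split : ∀ u v : V,
      (if G.Adj u v ∧ vertCond G c u < γ
        then c s(u,v) * (1/vertCond G c u + 1/vertCond G c v) else 0)
      = (if G.Adj u v ∧ vertCond G c u < γ then c s(u,v) * (1/vertCond G c u) else 0)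
        + (if G.Adj u v ∧ vertCond G c u < γ then c s(u,v) * (1/vertCond G c v) else 0) := by
    intro u v
    by_cases h : G.Adj u v ∧ vertCond G c u < γ
    · rw [if_pos h, if_pos h, if_pos h]; ring
    · rw [if_neg h, if_neg h, if_neg h]; ring
  simp only [split, Finset.sum_add_distrib]
  have hS1a : ∑ u : V, ∑ v : V,
      (if G.Adj u v ∧ vertCond G c u < γ then c s(u,v) * (1/vertCond G c u) else 0)
      ≤ δ * (Fintype.card V : ℝ) := by
    have e1 : ∀ u : V, ∑ v : V,
        (if G.Adj u v ∧ vertCond G c u < γ then c s(u,v) * (1/vertCond G c u) else 0)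
        = if vertCond G c u < γ then (1:ℝ) else 0 := by
      intro u
      rw [row_sum_mul_cond]
      by_cases h : vertCond G c u < γ
      · rw [if_pos h, if_pos h, mul_one_div, div_self (hCpos u).ne']
      · rw [if_neg h, if_neg h]
    rw [Finset.sum_congr rfl fun u _ => e1 u, Finset.sum_boole]
    simpa using hWc
  have hpoint : ∀ u v : V,
      (if G.Adj u v ∧ vertCond G c u < γ then c s(u,v) * (1/vertCond G c v) else 0)
      ≤ (if G.Adj u v ∧ vertCond G c v < γ then c s(u,v) * (1/vertCond G c v) else 0)
        + (if G.Adj u v ∧ vertCond G c u < γ then c s(u,v) * (1/γ) else 0) := by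
    intro u v
    by_cases h : G.Adj u v ∧ vertCond G c u < γ
    · rw [if_pos h]
      by_cases h2 : vertCond G c v < γ
      · rw [if_pos ⟨h.1, h2⟩, if_pos h]
        have h0 : (0:ℝ) ≤ c s(u,v) * (1/γ) := mul_nonneg (hcnn h.1) (by positivity)
        linarith
      · rw [if_neg (fun hh => h2 hh.2), if_pos h, zero_add]
        have h3 : 1/vertCond G c v ≤ 1/γ := one_div_le_one_div_of_le hγ (not_lt.mp h2)
        exact mul_le_mul_of_nonneg_left h3 (hcnn h.1)
    · rw [if_neg h]
      by_cases h2 : G.Adj u v ∧ vertCond G c v < γ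
      · rw [if_pos h2, if_neg h, add_zero]
        exact mul_nonneg (hcnn h2.1) (one_div_nonneg.mpr (hCpos v).le)
      · rw [if_neg h2, if_neg h, add_zero]
  have hS1b : ∑ u : V, ∑ v : V,
      (if G.Adj u v ∧ vertCond G c u < γ then c s(u,v) * (1/vertCond G c v) else 0)
      ≤ 2 * (δ * (Fintype.card V : ℝ)) := by
    have step := double_sum_le hpoint
    have ht : ∑ u : V, ∑ v : V,
        (if G.Adj u v ∧ vertCond G c v < γ then c s(u,v) * (1/vertCond G c v) else 0)
        ≤ δ * (Fintype.card V : ℝ) := by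
      rw [Finset.sum_comm]
      have e1 : ∀ v : V, ∑ u : V,
          (if G.Adj u v ∧ vertCond G c v < γ then c s(u,v) * (1/vertCond G c v) else 0)
          = if vertCond G c v < γ then (1:ℝ) else 0 := by
        intro v
        have e0 : ∀ u : V,
            (if G.Adj u v ∧ vertCond G c v < γ then c s(u,v) * (1/vertCond G c v) else 0)
            = (if G.Adj v u ∧ vertCond G c v < γ then c s(v,u) * (1/vertCond G c v) else 0) := by
          intro u
          by_cases h : G.Adj u v
          · by_cases h2 : vertCond G c v < γ
            · rw [if_pos ⟨h, h2⟩, if_pos ⟨h.symm, h2⟩, Sym2.eq_swap]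
            · rw [if_neg (fun hh => h2 hh.2), if_neg (fun hh => h2 hh.2)]
          · rw [if_neg (fun hh => h hh.1), if_neg (fun hh => h hh.1.symm)]
        rw [Finset.sum_congr rfl fun u _ => e0 u, row_sum_mul_cond]
        by_cases h2 : vertCond G c v < γ
        · rw [if_pos h2, if_pos h2, mul_one_div, div_self (hCpos v).ne']
        · rw [if_neg h2, if_neg h2]
      rw [Finset.sum_congr rfl fun v _ => e1 v, Finset.sum_boole]
      simpa using hWc
    have hs2 : ∑ u : V, ∑ v : V,
        (if G.Adj u v ∧ vertCond G c u < γ then c s(u,v) * (1/γ) else 0)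
        ≤ δ * (Fintype.card V : ℝ) := by
      have e1 : ∀ u : V, ∑ v : V,
          (if G.Adj u v ∧ vertCond G c u < γ then c s(u,v) * (1/γ) else 0)
          ≤ if vertCond G c u < γ then (1:ℝ) else 0 := by
        intro u
        rw [row_sum_mul_cond]
        by_cases h : vertCond G c u < γ
        · rw [if_pos h, if_pos h, mul_one_div]
          rw [div_le_one hγ]
          exact (h).le
        · rw [if_neg h, if_neg h]
      calc ∑ u : V, ∑ v : V,
          (if G.Adj u v ∧ vertCond G c u < γ then c s(u,v) * (1/γ) else 0)
          ≤ ∑ u : V, if vertCond G c u < γ then (1:ℝ) else 0 :=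
            Finset.sum_le_sum fun u _ => e1 u
        _ ≤ δ * (Fintype.card V : ℝ) := by rw [Finset.sum_boole]; simpa using hWc
    have hadd : ∑ u : V, ∑ v : V,
        ((if G.Adj u v ∧ vertCond G c v < γ then c s(u,v) * (1/vertCond G c v) else 0)
          + (if G.Adj u v ∧ vertCond G c u < γ then c s(u,v) * (1/γ) else 0))
        = (∑ u : V, ∑ v : V,
            (if G.Adj u v ∧ vertCond G c v < γ then c s(u,v) * (1/vertCond G c v) else 0))
          + ∑ u : V, ∑ v : V,
            (if G.Adj u v ∧ vertCond G c u < γ then c s(u,v) * (1/γ) else 0) := by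
      simp only [Finset.sum_add_distrib]
    rw [hadd] at step
    linarith
  linarith

lemma sum_touch_le {γ δ : ℝ} (hpos : ∀ e ∈ G.edgeSet, 0 < c e) (hγ : 0 < γ)
    (hCpos : ∀ w : V, 0 < vertCond G c w)
    (hWc : ((Finset.univ.filter fun v : V => vertCond G c v < γ).card : ℝ)
        ≤ δ * (Fintype.card V : ℝ)) :
    ∑ u : V, ∑ v : V,
        (if G.Adj u v ∧ (vertCond G c u < γ ∨ vertCond G c v < γ)
          then c s(u,v) * (1/vertCond G c u + 1/vertCond G c v) else 0)
      ≤ 6 * (δ * (Fintype.card V : ℝ)) := by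
  classical
  have hann : ∀ {u v : V}, G.Adj u v
      → 0 ≤ c s(u,v) * (1/vertCond G c u + 1/vertCond G c v) := by
    intro u v h
    refine mul_nonneg (hpos _ (G.mem_edgeSet.mpr h)).le ?_
    have := hCpos u
    have := hCpos v
    positivity
  have hpoint : ∀ u v : V,
      (if G.Adj u v ∧ (vertCond G c u < γ ∨ vertCond G c v < γ)
        then c s(u,v) * (1/vertCond G c u + 1/vertCond G c v) else 0)
      ≤ (if G.Adj u v ∧ vertCond G c u < γ
          then c s(u,v) * (1/vertCond G c u + 1/vertCond G c v) else 0)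
        + (if G.Adj u v ∧ vertCond G c v < γ
          then c s(u,v) * (1/vertCond G c u + 1/vertCond G c v) else 0) := by
    intro u v
    by_cases h : G.Adj u v
    · by_cases h1 : vertCond G c u < γ
      · rw [if_pos ⟨h, Or.inl h1⟩, if_pos ⟨h, h1⟩]
        by_cases h2 : vertCond G c v < γ
        · rw [if_pos ⟨h, h2⟩]; linarith [hann h]
        · rw [if_neg (fun hh => h2 hh.2), add_zero]
      · by_cases h2 : vertCond G c v < γ
        · rw [if_pos ⟨h, Or.inr h2⟩, if_neg (fun hh => h1 hh.2), if_pos ⟨h, h2⟩, zero_add]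
        · rw [if_neg (fun hh => hh.2.elim h1 h2), if_neg (fun hh => h1 hh.2),
            if_neg (fun hh => h2 hh.2), add_zero]
    · rw [if_neg (fun hh => h hh.1), if_neg (fun hh => h hh.1), if_neg (fun hh => h hh.1),
        add_zero]
  have step := double_sum_le hpoint
  have hadd : ∑ u : V, ∑ v : V,
      ((if G.Adj u v ∧ vertCond G c u < γ
        then c s(u,v) * (1/vertCond G c u + 1/vertCond G c v) else 0)
        + (if G.Adj u v ∧ vertCond G c v < γ
        then c s(u,v) * (1/vertCond G c u + 1/vertCond G c v) else 0))
      = (∑ u : V, ∑ v : V, (if G.Adj u v ∧ vertCond G c u < γ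
          then c s(u,v) * (1/vertCond G c u + 1/vertCond G c v) else 0))
        + ∑ u : V, ∑ v : V, (if G.Adj u v ∧ vertCond G c v < γ
          then c s(u,v) * (1/vertCond G c u + 1/vertCond G c v) else 0) := by
    simp only [Finset.sum_add_distrib]
  rw [hadd] at step
  have hsw : ∑ u : V, ∑ v : V, (if G.Adj u v ∧ vertCond G c v < γ
      then c s(u,v) * (1/vertCond G c u + 1/vertCond G c v) else 0)
      = ∑ u : V, ∑ v : V, (if G.Adj u v ∧ vertCond G c u < γ
      then c s(u,v) * (1/vertCond G c u + 1/vertCond G c v) else 0) := by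
    rw [Finset.sum_comm]
    refine Finset.sum_congr rfl fun v _ => Finset.sum_congr rfl fun u _ => ?_
    by_cases h : G.Adj u v ∧ vertCond G c v < γ
    · rw [if_pos h, if_pos ⟨h.1.symm, h.2⟩, Sym2.eq_swap]
      ring
    · rw [if_neg h, if_neg (fun hh => h ⟨hh.1.symm, hh.2⟩)]
  rw [hsw] at step
  have h1 := sum_s1_le hpos hγ hCpos hWc
  linarith

end Touch

section MainStep

variable {G c}

lemma master_pointwise {γ δ : ℝ} (hpos : ∀ e ∈ G.edgeSet, 0 < c e) (hconn : G.Connected)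
    (hγ : 0 < γ) (hδ1 : δ < 1) (hc : ∀ e ∈ G.edgeSet, c e ≤ δ * γ) (hδ0 : 0 ≤ δ)
    (hCpos : ∀ w : V, 0 < vertCond G c w) (u v : V) :
    (1 - 4*δ) * (if G.Adj u v then c s(u,v) * (1/vertCond G c u + 1/vertCond G c v) else 0)
      ≤ (if G.Adj u v then (if effRes G c u v ≤ 4/γ then c s(u,v) * effRes G c u v else 0)
            else 0)
        + (1/2) * (if G.Adj u v
            then (if effRes G c u v ≤ 4/γ then 0 else c s(u,v) * effRes G c u v) else 0)
        + (if G.Adj u v ∧ (vertCond G c u < γ ∨ vertCond G c v < γ)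
            then c s(u,v) * (1/vertCond G c u + 1/vertCond G c v) else 0) := by
  by_cases h : G.Adj u v
  · have hcp : 0 < c s(u,v) := hpos _ (G.mem_edgeSet.mpr h)
    have hRpos : 0 < effRes G c u v := effRes_pos hpos hconn h
    have ha : 0 ≤ c s(u,v) * (1/vertCond G c u + 1/vertCond G c v) := by
      have h1 := hCpos u
      have h2 := hCpos v
      positivity
    have hgnn : 0 ≤ (if effRes G c u v ≤ 4/γ then c s(u,v) * effRes G c u v else 0) := by
      split_ifs
      · exact (mul_pos hcp hRpos).le
      · exact le_rfl
    have hbnn : 0 ≤ (if effRes G c u v ≤ 4/γ then 0 else c s(u,v) * effRes G c u v) := by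
      split_ifs
      · exact le_rfl
      · exact (mul_pos hcp hRpos).le
    rw [if_pos h, if_pos h, if_pos h]
    have hce : c s(u,v) ≤ δ * γ := hc _ (G.mem_edgeSet.mpr h)
    by_cases hgood : effRes G c u v ≤ 4/γ
    · rw [if_pos hgood, if_pos hgood, mul_zero, add_zero]
      by_cases htch : vertCond G c u < γ ∨ vertCond G c v < γ
      · rw [if_pos (⟨h, htch⟩ : G.Adj u v ∧ (vertCond G c u < γ ∨ vertCond G c v < γ))]
        nlinarith [mul_nonneg hδ0 ha, (mul_pos hcp hRpos).le]
      · rw [if_neg (fun hh : G.Adj u v ∧ (vertCond G c u < γ ∨ vertCond G c v < γ)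
            => htch hh.2), add_zero]
        push_neg at htch
        obtain ⟨hCu, hCv⟩ := htch
        exact per_edge_lower hpos hconn h hγ hδ1 hCu hCv hce
    · rw [if_neg hgood, if_neg hgood, zero_add]
      by_cases htch : vertCond G c u < γ ∨ vertCond G c v < γ
      · rw [if_pos (⟨h, htch⟩ : G.Adj u v ∧ (vertCond G c u < γ ∨ vertCond G c v < γ))]
        nlinarith [mul_nonneg hδ0 ha, (mul_pos hcp hRpos).le]
      · rw [if_neg (fun hh : G.Adj u v ∧ (vertCond G c u < γ ∨ vertCond G c v < γ)
            => htch hh.2), add_zero]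
        push_neg at htch
        obtain ⟨hCu, hCv⟩ := htch
        push_neg at hgood
        have e1 : 1/vertCond G c u ≤ 1/γ := one_div_le_one_div_of_le hγ hCu
        have e2 : 1/vertCond G c v ≤ 1/γ := one_div_le_one_div_of_le hγ hCv
        have e3 : c s(u,v) * (1/vertCond G c u + 1/vertCond G c v)
            ≤ c s(u,v) * (2/γ) := by
          have h23 : 1/vertCond G c u + 1/vertCond G c v ≤ 2/γ := by
            have h24 : (2:ℝ)/γ = 1/γ + 1/γ := by ring
            linarith
          exact mul_le_mul_of_nonneg_left h23 hcp.le
        have e4 : c s(u,v) * (4/γ) ≤ c s(u,v) * effRes G c u v :=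
          mul_le_mul_of_nonneg_left hgood.le hcp.le
        have e5 : c s(u,v) * (4/γ) = 2 * (c s(u,v) * (2/γ)) := by ring
        nlinarith [mul_nonneg hδ0 ha]
  · rw [if_neg h, if_neg h, if_neg h, if_neg (fun hh : _ ∧ _ => h hh.1)]
    simp

lemma main_step {γ δ : ℝ} (hconn : G.Connected) (hpos : ∀ e ∈ G.edgeSet, 0 < c e)
    (hγ : 0 < γ) (hδhalf : δ ≤ 1/2)
    (hW : (((Finset.univ.filter fun v : V => γ ≤ vertCond G c v).card : ℝ))
        ≥ (1 - δ) * (Fintype.card V : ℝ))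
    (hc : ∀ e ∈ G.edgeSet, c e ≤ δ * γ) (hE : G.edgeSet.Nonempty) :
    (1 / 2) * ∑ u : V, ∑ v ∈ G.neighborFinset u,
        (if effRes G c u v ≤ 4 / γ then 0 else c s(u, v) * effRes G c u v)
      ≤ 14 * (δ * (Fintype.card V : ℝ)) := by
  classical
  obtain ⟨e0, he0⟩ := hE
  induction e0 using Sym2.ind with
  | _ a0 b0 =>
  have hab : G.Adj a0 b0 := G.mem_edgeSet.mp he0
  have hδpos : 0 < δ := by
    have h1 := hpos _ he0
    have h2 := hc _ he0
    nlinarith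
  have hδ1 : δ < 1 := by linarith
  have hnbr : ∀ w : V, ∃ z, G.Adj w z := by
    intro w
    obtain ⟨p⟩ := hconn.preconnected w a0
    cases p with
    | nil => exact ⟨b0, hab⟩
    | cons hadj _ => exact ⟨_, hadj⟩
  have hCpos : ∀ w : V, 0 < vertCond G c w := by
    intro w
    obtain ⟨z, hz⟩ := hnbr w
    rw [vertCond]
    apply Finset.sum_pos
    · intro z' hz'
      have hadj : G.Adj w z' := (SimpleGraph.mem_neighborFinset _ _ _).mp hz'
      exact hpos _ (G.mem_edgeSet.mpr hadj.symm)
    · exact ⟨z, (SimpleGraph.mem_neighborFinset _ _ _).mpr hz⟩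
  have hWc := card_Wc (G := G) (c := c) hW
  have hconv : ∑ u : V, ∑ v ∈ G.neighborFinset u,
      (if effRes G c u v ≤ 4 / γ then 0 else c s(u, v) * effRes G c u v)
      = ∑ u : V, ∑ v : V, (if G.Adj u v
          then (if effRes G c u v ≤ 4/γ then 0 else c s(u,v) * effRes G c u v) else 0) :=
    Finset.sum_congr rfl fun u _ => sum_nbr G
      (fun v => if effRes G c u v ≤ 4 / γ then 0 else c s(u, v) * effRes G c u v) u
  have hmaster := double_sum_le
    (fun u v => master_pointwise hpos hconn hγ hδ1 hc hδpos.le hCpos u v)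
  have hLrw : ∑ u : V, ∑ v : V, (1 - 4*δ)
        * (if G.Adj u v then c s(u,v) * (1/vertCond G c u + 1/vertCond G c v) else 0)
      = (1 - 4*δ) * ∑ u : V, ∑ v : V,
        (if G.Adj u v then c s(u,v) * (1/vertCond G c u + 1/vertCond G c v) else 0) := by
    simp only [Finset.mul_sum]
  have hRrw : ∑ u : V, ∑ v : V,
      ((if G.Adj u v then (if effRes G c u v ≤ 4/γ then c s(u,v) * effRes G c u v else 0)
            else 0)
        + (1/2) * (if G.Adj u v
            then (if effRes G c u v ≤ 4/γ then 0 else c s(u,v) * effRes G c u v) else 0)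
        + (if G.Adj u v ∧ (vertCond G c u < γ ∨ vertCond G c v < γ)
            then c s(u,v) * (1/vertCond G c u + 1/vertCond G c v) else 0))
      = (∑ u : V, ∑ v : V, (if G.Adj u v
            then (if effRes G c u v ≤ 4/γ then c s(u,v) * effRes G c u v else 0) else 0))
        + (1/2) * (∑ u : V, ∑ v : V, (if G.Adj u v
            then (if effRes G c u v ≤ 4/γ then 0 else c s(u,v) * effRes G c u v) else 0))
        + ∑ u : V, ∑ v : V, (if G.Adj u v ∧ (vertCond G c u < γ ∨ vertCond G c v < γ)
            then c s(u,v) * (1/vertCond G c u + 1/vertCond G c v) else 0) := by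
    simp only [Finset.sum_add_distrib, Finset.mul_sum]
  rw [hLrw, hRrw] at hmaster
  have hSa := sum_a_eq (G := G) (c := c) hCpos
  have htouch := sum_touch_le hpos hγ hCpos hWc
  have hgb : (∑ u : V, ∑ v : V, (if G.Adj u v
        then (if effRes G c u v ≤ 4/γ then c s(u,v) * effRes G c u v else 0) else 0))
      + (∑ u : V, ∑ v : V, (if G.Adj u v
        then (if effRes G c u v ≤ 4/γ then 0 else c s(u,v) * effRes G c u v) else 0))
      = 2 * ((Fintype.card V : ℝ) - 1) := by
    rw [← foster' hpos hconn, ← Finset.sum_add_distrib]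
    refine Finset.sum_congr rfl fun u _ => ?_
    rw [← Finset.sum_add_distrib]
    refine Finset.sum_congr rfl fun v _ => ?_
    by_cases h : G.Adj u v
    · rw [if_pos h, if_pos h, if_pos h]
      by_cases hg : effRes G c u v ≤ 4/γ
      · rw [if_pos hg, if_pos hg, add_zero]
      · rw [if_neg hg, if_neg hg, zero_add]
    · rw [if_neg h, if_neg h, if_neg h, add_zero]
  have hbnn : 0 ≤ ∑ u : V, ∑ v : V, (if G.Adj u v
      then (if effRes G c u v ≤ 4/γ then 0 else c s(u,v) * effRes G c u v) else 0) := by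
    refine Finset.sum_nonneg fun u _ => Finset.sum_nonneg fun v _ => ?_
    by_cases h : G.Adj u v
    · rw [if_pos h]
      split_ifs with hg
      · exact le_rfl
      · exact (mul_pos (hpos _ (G.mem_edgeSet.mpr h)) (effRes_pos hpos hconn h)).le
    · rw [if_neg h]
  rw [hconv]
  rw [hSa] at hmaster
  linarith
end MainStep

end Aux

/-- Under Assumption (EO) (with `Gₙ` simple and `cₙ` connected), with
`Eₙ(ε) = {(u,v) ∈ E(Gₙ) : R_eff(u↔v) ≤ ε}`, we have
`Σ_{(u,v)∈E(Gₙ)∖Eₙ(4/γₙ)} c(u,v)·R_eff(u↔v) = O(δₙ)|V(Gₙ)|`.  (Each unordered edge is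
counted once; below the sum over ordered adjacent pairs is halved.) -/
theorem effRes_bad_edge_sum_bigO
    (V : ℕ → Type) [∀ n, Fintype (V n)] [∀ n, DecidableEq (V n)]
    (G : ∀ n, SimpleGraph (V n)) [∀ n, DecidableRel (G n).Adj]
    (c : ∀ n, Sym2 (V n) → ℝ) (γ : ℕ → ℝ) (δ : ℕ → ℝ)
    (hconn : ∀ n, (G n).Connected)
    (hpos : ∀ n, ∀ e ∈ (G n).edgeSet, 0 < c n e)
    (hγ : ∀ n, 0 < γ n)
    (hδ : Tendsto δ atTop (nhds 0))
    (hW : ∀ᶠ n in atTop,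
      (((Finset.univ.filter fun v : V n => γ n ≤ vertCond (G n) (c n) v).card : ℝ))
        ≥ (1 - δ n) * (Fintype.card (V n) : ℝ))
    (hc : ∀ᶠ n in atTop, ∀ e ∈ (G n).edgeSet, c n e ≤ δ n * γ n) :
    (fun n => (1 / 2) * ∑ u : V n, ∑ v ∈ (G n).neighborFinset u,
        (if effRes (G n) (c n) u v ≤ 4 / γ n then 0
         else c n s(u, v) * effRes (G n) (c n) u v))
      =O[atTop] fun n => δ n * (Fintype.card (V n) : ℝ) := by
  rw [Asymptotics.isBigO_iff]
  refine ⟨14, ?_⟩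
  have hhalf : ∀ᶠ n in atTop, δ n < 1/2 := hδ.eventually_lt_const (by norm_num)
  filter_upwards [hW, hc, hhalf] with n hWn hcn hδn
  rw [Real.norm_eq_abs, Real.norm_eq_abs]
  by_cases hE : (G n).edgeSet.Nonempty
  · have hms := main_step (hconn n) (hpos n) (hγ n) hδn.le hWn hcn hE
    have hδpos : 0 < δ n := by
      obtain ⟨e0, he0⟩ := hE
      have h1 := hpos n _ he0
      have h2 := hcn _ he0
      nlinarith [hγ n]
    have hnn : 0 ≤ (1 / 2) * ∑ u : V n, ∑ v ∈ (G n).neighborFinset u,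
        (if effRes (G n) (c n) u v ≤ 4 / γ n then 0
         else c n s(u, v) * effRes (G n) (c n) u v) := by
      refine mul_nonneg (by norm_num) (Finset.sum_nonneg fun u _ =>
        Finset.sum_nonneg fun v hv => ?_)
      have hadj : (G n).Adj u v := (SimpleGraph.mem_neighborFinset _ _ _).mp hv
      split_ifs
      · exact le_rfl
      · exact (mul_pos (hpos n _ ((G n).mem_edgeSet.mpr hadj))
          (effRes_pos (hpos n) (hconn n) hadj)).le
    rw [abs_of_nonneg hnn]
    have hrhs : 0 ≤ δ n * (Fintype.card (V n) : ℝ) :=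
      mul_nonneg hδpos.le (Nat.cast_nonneg _)
    rw [abs_of_nonneg hrhs]
    exact hms
  · have hzero : ∀ u : V n, ∑ v ∈ (G n).neighborFinset u,
        (if effRes (G n) (c n) u v ≤ 4 / γ n then 0
         else c n s(u, v) * effRes (G n) (c n) u v) = 0 := by
      intro u
      refine Finset.sum_eq_zero fun v hv => ?_
      have hadj : (G n).Adj u v := (SimpleGraph.mem_neighborFinset _ _ _).mp hv
      exact absurd ⟨_, (G n).mem_edgeSet.mpr hadj⟩ hE
    rw [Finset.sum_congr rfl fun u _ => hzero u]
    simp only [Finset.sum_const_zero, mul_zero, abs_zero]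
    positivity

end WSTPaper
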